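/- arXiv:1403.7058 — 3 statements merged into one kernel-verified Lean document; each statement's English description precedes it below -/
import Mathlib

section
/- Fix c ∈ (0, 1) and let t be a positive even integer with t/2 even and with the following nondegeneracy: for every x ∈ D both sets {y ∈ D : Δ(x,y) ≥ t/2 + c√t} and {y ∈ D : Δ(x,y) ≤ t/2 − c√t} are nonempty, where D := {x ∈ {0,1}^t : wt(x) = t/2}. Define g(S,T) := 1 if Δ(S,T) > t/2 and 0 otherwise; define f_c(S,T) := 1 if Δ(S,T) ≥ t/2 + c√t and f_c(S,T) := 0 if Δ(S,T) ≤ t/2 − c√t. Let ζ be the uniform distribution on D × D, and let μ be the distribution on D × D in which S is uniform on D, and then with probability 1/2 the string T is uniform on {y ∈ D : Δ(S,y) ≥ t/2 + c√t} and with probability 1/2 uniform on {y ∈ D : Δ(S,y) ≤ t/2 − c√t}. Let q := Pr_{(S,T)∼ζ}[t/2 − c√t < Δ(S,T) < t/2 + c√t]. Then for every finite probability space (Ω, p), every finite message type Σ, every message function M : D × Ω → Σ, every reconstruction function R : Σ × D → {0,1}, and every δ ∈ [0,1]: if Pr_{(S,T)∼μ, ω∼p}[R(M(S,ω), T) = f_c(S,T)]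 ≥ 1 − δ, then Pr_{(S,T)∼ζ, ω∼p}[R(M(S,ω), T) = g(S,T)] ≥ (1 − δ)·(1 − q). -/
open Finset

attribute [local instance] Classical.propDecidable

/-- The set `D` of bit strings of length `t` with Hamming weight exactly `t/2`. -/
abbrev BalStr (t : ℕ) := {x : Fin t → Bool // (Finset.univ.filter (fun i => x i = true)).card = t / 2}

/-- The strings of `D` at Hamming distance `≥ t/2 + c√t` from `S`. -/
noncomputable def FarB (t : ℕ) (c : ℝ) (S : BalStr t) : Finset (BalStr t) :=
  Finset.univ.filter (fun T => (t : ℝ) / 2 + c * Real.sqrt t ≤ (hammingDist S.1 T.1 : ℝ))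

/-- The strings of `D` at Hamming distance `≤ t/2 − c√t` from `S`. -/
noncomputable def NearB (t : ℕ) (c : ℝ) (S : BalStr t) : Finset (BalStr t) :=
  Finset.univ.filter (fun T => (hammingDist S.1 T.1 : ℝ) ≤ (t : ℝ) / 2 - c * Real.sqrt t)

/-- The density of the distribution `μ`: `S` uniform on `D`; given `S`, with probability `1/2`
the string `T` is uniform on `FarB S` and with probability `1/2` uniform on `NearB S`. -/
noncomputable def muDens (t : ℕ) (c : ℝ) (S T : BalStr t) : ℝ :=
  (1 / (Fintype.card (BalStr t) : ℝ)) *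
    ((1 / 2) * (if T ∈ FarB t c S then (1 : ℝ) / ((FarB t c S).card : ℝ) else 0) +
     (1 / 2) * (if T ∈ NearB t c S then (1 : ℝ) / ((NearB t c S).card : ℝ) else 0))

/-!
Coordinate permutations act transitively on `D` and preserve Hamming distance, so the number of
`T` in a given distance band around `S` does not depend on `S`; complementing `T` (which stays
in `D` since `t` is even) exchanges the far and near bands, so both have the same size `F`.
Hence `1 - q = 2F/|D|`, while `μ` gives mass `1/(2F|D|)` to every pair outside the gap, so
`(1 - q) μ ≤ ζ` pointwise. Outside the gap `f_c` agrees with `g`, and `μ` vanishes on the gap.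
-/

section HammingSymmetry

variable {ι : Type*} [Fintype ι]

theorem hammingDist_comp_perm {β : Type*} [DecidableEq β] (π : Equiv.Perm ι) (x y : ι → β) :
    hammingDist (x ∘ π) (y ∘ π) = hammingDist x y :=
  card_equiv π (by simp)

theorem card_filter_comp_perm (π : Equiv.Perm ι) (x : ι → Bool) :
    #{i | (x ∘ π) i = true} = #{i | x i = true} :=
  card_equiv π (by simp)

theorem card_filter_not_eq (x : ι → Bool) :
    #{i | (!x i) = true} = Fintype.card ι - #{i | x i = true} := by
  simp only [Bool.not_eq_true', ← Bool.not_eq_true]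
  rw [filter_not, card_sdiff_of_subset (filter_subset _ _), card_univ]

theorem hammingDist_not_right (x y : ι → Bool) :
    hammingDist x (fun i => !y i) = Fintype.card ι - hammingDist x y := by
  have h : ∀ i, (x i ≠ !y i) ↔ ¬ (x i ≠ y i) := by intro i; cases x i <;> cases y i <;> simp
  simp only [hammingDist, h]
  rw [filter_not, card_sdiff_of_subset (filter_subset _ _), card_univ]

theorem exists_perm_comp_eq_of_card_filter_eq {x y : ι → Bool}
    (h : #{i | x i = true} = #{i | y i = true}) : ∃ π : Equiv.Perm ι, y ∘ π = x := by
  have hfib : ∀ b, Fintype.card {i // x i = b} = Fintype.card {i // y i = b} := by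
    have hfalse : #{i | (!x i) = true} = #{i | (!y i) = true} := by
      rw [card_filter_not_eq, card_filter_not_eq, h]
    intro b
    cases b
    · simpa [Fintype.card_subtype] using hfalse
    · simpa [Fintype.card_subtype] using h
  exact ⟨Equiv.ofFiberEquiv fun b => Fintype.equivOfCardEq (hfib b),
    funext (Equiv.ofFiberEquiv_map _)⟩

end HammingSymmetry

namespace BalStr

variable {t : ℕ}

def relabel (π : Equiv.Perm (Fin t)) : BalStr t ≃ BalStr t where
  toFun x := ⟨x.1 ∘ π, (card_filter_comp_perm π x.1).trans x.2⟩
  invFun x := ⟨x.1 ∘ π.symm, (card_filter_comp_perm π.symm x.1).trans x.2⟩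
  left_inv x := by ext; simp
  right_inv x := by ext; simp

theorem hammingDist_relabel (π : Equiv.Perm (Fin t)) (S T : BalStr t) :
    hammingDist (relabel π S).1 (relabel π T).1 = hammingDist S.1 T.1 :=
  hammingDist_comp_perm π S.1 T.1

theorem exists_relabel_eq (S S' : BalStr t) : ∃ π, relabel π S' = S := by
  obtain ⟨π, hπ⟩ := exists_perm_comp_eq_of_card_filter_eq (S.2.trans S'.2.symm)
  exact ⟨π, Subtype.ext hπ⟩

theorem card_filter_hammingDist_congr (P : ℕ → Prop) (S S' : BalStr t) :
    #{T : BalStr t | P (hammingDist S.1 T.1)} = #{T : BalStr t | P (hammingDist S'.1 T.1)} := by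
  obtain ⟨π, rfl⟩ := exists_relabel_eq S S'
  exact card_equiv (relabel π).symm fun T => by
    simpa using congrArg P (hammingDist_relabel π S' ((relabel π).symm T))

theorem card_filter_pairs_hammingDist (P : ℕ → Prop) (S : BalStr t) :
    #{q : BalStr t × BalStr t | P (hammingDist q.1.1 q.2.1)} =
      Fintype.card (BalStr t) * #{T : BalStr t | P (hammingDist S.1 T.1)} := by
  rw [card_filter, ← univ_product_univ, sum_product]
  simp only [← card_filter, card_filter_hammingDist_congr P _ S, sum_const, card_univ, smul_eq_mul]

def compl (h : 2 ∣ t) : Equiv.Perm (BalStr t) :=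
  Function.Involutive.toPerm
    (fun x => ⟨fun i => !x.1 i, by
      rw [card_filter_not_eq, x.2, Fintype.card_fin]; omega⟩)
    fun x => by ext; simp

theorem hammingDist_compl_right (h : 2 ∣ t) (S T : BalStr t) :
    hammingDist S.1 (compl h T).1 = t - hammingDist S.1 T.1 :=
  (hammingDist_not_right S.1 T.1).trans (by rw [Fintype.card_fin])

end BalStr

theorem add_le_iff_div_two_lt {t d : ℕ} {ε : ℝ} (hε : 0 < ε)
    (hd : ¬ ((t : ℝ) / 2 - ε < d ∧ (d : ℝ) < t / 2 + ε)) : (t : ℝ) / 2 + ε ≤ d ↔ t / 2 < d := by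
  rw [Nat.div_lt_iff_lt_mul two_pos, ← Nat.cast_lt (α := ℝ)]
  push_cast
  constructor
  · intro h
    linarith
  · intro h
    by_contra h'
    exact hd ⟨by linarith, not_le.1 h'⟩

section GapProblem

variable {t : ℕ} {c : ℝ}

theorem disjoint_farB_nearB (hc : 0 < c * √t) (S : BalStr t) :
    Disjoint (FarB t c S) (NearB t c S) := by
  rw [FarB, NearB, disjoint_filter]
  intro T _ hfar hnear
  linarith

theorem card_nearB_eq_card_farB (h2 : 2 ∣ t) (S : BalStr t) :
    #(NearB t c S) = #(FarB t c S) := by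
  refine card_equiv (BalStr.compl h2) fun T => ?_
  have hle : hammingDist S.1 T.1 ≤ t := by
    simpa using hammingDist_le_card_fintype (x := S.1) (y := T.1)
  simp only [FarB, NearB, mem_filter, mem_univ, true_and, BalStr.hammingDist_compl_right,
    Nat.cast_sub hle]
  constructor <;> intro h <;> linarith

theorem filter_not_gap_eq_farB_union_nearB (S : BalStr t) :
    univ.filter (fun T : BalStr t => ¬ ((t : ℝ) / 2 - c * √t < hammingDist S.1 T.1 ∧
      (hammingDist S.1 T.1 : ℝ) < t / 2 + c * √t)) = FarB t c S ∪ NearB t c S := by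
  ext T
  simp only [FarB, NearB, mem_filter, mem_univ, true_and, mem_union, not_and_or, not_lt]
  tauto

theorem muDens_eq_zero_of_gap {S T : BalStr t}
    (hT : (t : ℝ) / 2 - c * √t < hammingDist S.1 T.1 ∧ (hammingDist S.1 T.1 : ℝ) < t / 2 + c * √t) :
    muDens t c S T = 0 := by
  have hT' : T ∉ FarB t c S ∪ NearB t c S := by
    rw [← filter_not_gap_eq_farB_union_nearB]
    simpa using hT
  rw [mem_union, not_or] at hT'
  simp [muDens, hT'.1, hT'.2]

noncomputable def gapProb (t : ℕ) (c : ℝ) : ℝ :=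
  (#{q : BalStr t × BalStr t | (t : ℝ) / 2 - c * √t < hammingDist q.1.1 q.2.1 ∧
      (hammingDist q.1.1 q.2.1 : ℝ) < t / 2 + c * √t} : ℝ) / (Fintype.card (BalStr t) : ℝ) ^ 2

theorem gapProb_le_one : gapProb t c ≤ 1 := by
  refine div_le_one_of_le₀ ?_ (by positivity)
  have := card_filter_le (univ : Finset (BalStr t × BalStr t)) fun q =>
    (t : ℝ) / 2 - c * √t < hammingDist q.1.1 q.2.1 ∧ (hammingDist q.1.1 q.2.1 : ℝ) < t / 2 + c * √t
  rw [card_univ, Fintype.card_prod] at this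
  exact_mod_cast this.trans_eq (sq _).symm

theorem one_sub_gapProb_eq (hc : 0 < c * √t) (h2 : 2 ∣ t) (S : BalStr t) :
    1 - gapProb t c = 2 * #(FarB t c S) / Fintype.card (BalStr t) := by
  have hpart := card_filter_add_card_filter_not (s := univ) fun T : BalStr t =>
    (t : ℝ) / 2 - c * √t < hammingDist S.1 T.1 ∧ (hammingDist S.1 T.1 : ℝ) < t / 2 + c * √t
  rw [filter_not_gap_eq_farB_union_nearB, card_union_of_disjoint (disjoint_farB_nearB hc S),
    card_nearB_eq_card_farB h2, card_univ] at hpart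
  have hN : (Fintype.card (BalStr t) : ℝ) ≠ 0 := Nat.cast_ne_zero.2 (Fintype.card_pos_iff.2 ⟨S⟩).ne'
  have hpairs : #{q : BalStr t × BalStr t | (t : ℝ) / 2 - c * √t < hammingDist q.1.1 q.2.1 ∧
      (hammingDist q.1.1 q.2.1 : ℝ) < t / 2 + c * √t} = Fintype.card (BalStr t) *
      #{T : BalStr t | (t : ℝ) / 2 - c * √t < hammingDist S.1 T.1 ∧
        (hammingDist S.1 T.1 : ℝ) < t / 2 + c * √t} := by
    -- only the `Decidable` instances of the filters differ
    convert BalStr.card_filter_pairs_hammingDist (fun d =>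
      (t : ℝ) / 2 - c * √t < d ∧ (d : ℝ) < t / 2 + c * √t) S
  rw [gapProb, hpairs, Nat.cast_mul, sq, mul_div_mul_left _ _ hN, eq_div_iff hN, sub_mul,
    div_mul_cancel₀ _ hN, ← hpart]
  push_cast
  ring

theorem muDens_mul_one_sub_gapProb_le (hc : 0 < c * √t) (h2 : 2 ∣ t) (S T : BalStr t) :
    muDens t c S T * (1 - gapProb t c) ≤ 1 / (Fintype.card (BalStr t) : ℝ) ^ 2 := by
  set N : ℝ := (Fintype.card (BalStr t) : ℝ)
  set F : ℝ := (#(FarB t c S) : ℝ)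
  have hmu : muDens t c S T ≤ 1 / N * (1 / 2 * (1 / F)) := by
    rw [muDens, card_nearB_eq_card_farB h2]
    split_ifs with hfar hnear hnear
    · exact absurd hnear (disjoint_left.1 (disjoint_farB_nearB hc S) hfar)
    · simp [N, F]
    · simp [N, F]
    · simp only [mul_zero, add_zero]
      positivity
  rw [one_sub_gapProb_eq hc h2 S]
  calc muDens t c S T * (2 * F / N) ≤ 1 / N * (1 / 2 * (1 / F)) * (2 * F / N) := by gcongr
    _ = F / F / N ^ 2 := by ring
    _ ≤ 1 / N ^ 2 := by gcongr; exact div_self_le_one F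

theorem muDens_term_mul_one_sub_gapProb_le (hc : 0 < c * √t) (h2 : 2 ∣ t) (S T : BalStr t)
    {a : ℝ} (ha : 0 ≤ a) (b : Bool) :
    muDens t c S T * a *
        (if b = (if (t : ℝ) / 2 + c * √t ≤ (hammingDist S.1 T.1 : ℝ) then true else false)
          then 1 else 0) * (1 - gapProb t c) ≤
      1 / (Fintype.card (BalStr t) : ℝ) ^ 2 * a *
        (if b = (if t / 2 < hammingDist S.1 T.1 then true else false) then 1 else 0) := by
  by_cases hgap : (t : ℝ) / 2 - c * √t < hammingDist S.1 T.1 ∧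
      (hammingDist S.1 T.1 : ℝ) < t / 2 + c * √t
  · rw [muDens_eq_zero_of_gap hgap]
    simp only [zero_mul]
    positivity
  · simp only [add_le_iff_div_two_lt hc hgap]
    have hmu := muDens_mul_one_sub_gapProb_le hc h2 S T
    calc _ = muDens t c S T * (1 - gapProb t c) *
          (a * if b = (if t / 2 < hammingDist S.1 T.1 then true else false) then 1 else 0) := by
          ring
      _ ≤ 1 / (Fintype.card (BalStr t) : ℝ) ^ 2 *
          (a * if b = (if t / 2 < hammingDist S.1 T.1 then true else false) then 1 else 0) := by
          gcongr
      _ = _ := by ring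

end GapProblem

theorem mu_to_zeta_reduction_general (c : ℝ) (hc0 : 0 < c)
    (t : ℕ) (ht : 0 < t) (ht4 : 4 ∣ t)
    (Ω : Type) [Fintype Ω] (p : Ω → ℝ) (hp : ∀ ω, 0 ≤ p ω)
    (σ : Type) (M : BalStr t → Ω → σ) (R : σ → BalStr t → Bool)
    (δ : ℝ)
    (hsucc : 1 - δ ≤ ∑ S : BalStr t, ∑ T : BalStr t, ∑ ω : Ω,
      muDens t c S T * p ω *
        (if R (M S ω) T =
            (if (t : ℝ) / 2 + c * Real.sqrt t ≤ (hammingDist S.1 T.1 : ℝ) then true else false)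
         then 1 else 0)) :
    (1 - δ) * (1 -
        (((Finset.univ.filter (fun q : BalStr t × BalStr t =>
            (t : ℝ) / 2 - c * Real.sqrt t < (hammingDist q.1.1 q.2.1 : ℝ) ∧
            (hammingDist q.1.1 q.2.1 : ℝ) < (t : ℝ) / 2 + c * Real.sqrt t)).card : ℝ) /
          ((Fintype.card (BalStr t) : ℝ)) ^ 2)) ≤
      ∑ S : BalStr t, ∑ T : BalStr t, ∑ ω : Ω,
        (1 / ((Fintype.card (BalStr t) : ℝ)) ^ 2) * p ω *
          (if R (M S ω) T = (if t / 2 < hammingDist S.1 T.1 then true else false)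
           then 1 else 0) := by
  have hc : 0 < c * √t := mul_pos hc0 (Real.sqrt_pos.2 (Nat.cast_pos.2 ht))
  have h2 : 2 ∣ t := (by norm_num : 2 ∣ 4).trans ht4
  change (1 - δ) * (1 - gapProb t c) ≤ _
  refine (mul_le_mul_of_nonneg_right hsucc (sub_nonneg.2 gapProb_le_one)).trans ?_
  simp only [sum_mul]
  refine sum_le_sum fun S _ => sum_le_sum fun T _ => sum_le_sum fun ω _ => ?_
  exact muDens_term_mul_one_sub_gapProb_le hc h2 S T (hp ω) _

/-- If a one-way protocol `(M, R)` errs with probability at most `δ` for the gap problem `f_c`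
under `μ`, then it errs with probability at most `1 − (1−δ)(1−q)` for the threshold problem `g`
under the uniform distribution `ζ` on `D × D`, where `q` is the `ζ`-probability of the gap
region `t/2 − c√t < Δ < t/2 + c√t`. -/
theorem mu_to_zeta_reduction (c : ℝ) (hc0 : 0 < c) (hc1 : c < 1)
    (t : ℕ) (ht : 0 < t) (ht4 : 4 ∣ t)
    (hnd : ∀ S : BalStr t, (FarB t c S).Nonempty ∧ (NearB t c S).Nonempty)
    (Ω : Type) [Fintype Ω] (p : Ω → ℝ) (hp : ∀ ω, 0 ≤ p ω) (hp1 : (∑ ω, p ω) = 1)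
    (σ : Type) [Fintype σ] (M : BalStr t → Ω → σ) (R : σ → BalStr t → Bool)
    (δ : ℝ) (hδ0 : 0 ≤ δ) (hδ1 : δ ≤ 1)
    (hsucc : 1 - δ ≤ ∑ S : BalStr t, ∑ T : BalStr t, ∑ ω : Ω,
      muDens t c S T * p ω *
        (if R (M S ω) T =
            (if (t : ℝ) / 2 + c * Real.sqrt t ≤ (hammingDist S.1 T.1 : ℝ) then true else false)
         then 1 else 0)) :
    (1 - δ) * (1 -
        (((Finset.univ.filter (fun q : BalStr t × BalStr t =>
            (t : ℝ) / 2 - c * Real.sqrt t < (hammingDist q.1.1 q.2.1 : ℝ) ∧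
            (hammingDist q.1.1 q.2.1 : ℝ) < (t : ℝ) / 2 + c * Real.sqrt t)).card : ℝ) /
          ((Fintype.card (BalStr t) : ℝ)) ^ 2)) ≤
      ∑ S : BalStr t, ∑ T : BalStr t, ∑ ω : Ω,
        (1 / ((Fintype.card (BalStr t) : ℝ)) ^ 2) * p ω *
          (if R (M S ω) T = (if t / 2 < hammingDist S.1 T.1 then true else false)
           then 1 else 0) :=
  mu_to_zeta_reduction_general c hc0 t ht ht4 Ω p hp σ M R δ hsucc
end

section
/- Let G = (V, E) be a finite simple graph with |V| = n and |E| = s ≥ 1, and let w : E → ℝ be nonnegative edge weights. Then there exists an integer-valued weight function w' : E → ℤ with w'(e) ∈ {⌊w(e)⌋, ⌈w(e)⌉} for every e ∈ E, such that for every subset S ⊆ V: |cut_{w'}(S) − cut_w(S)| ≤ √(s·(n+1)). -/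
open Finset

attribute [local instance] Classical.propDecidable

/-- The weighted cut value of an edge-weight function `w` on a graph `G`:
the sum of `w` over the edges of `G` with exactly one endpoint in `S`. -/
noncomputable def cutEdges {V : Type} [Fintype V] (G : SimpleGraph V)
    (w : Sym2 V → ℝ) (S : Finset V) : ℝ :=
  ∑ u ∈ S, ∑ v ∈ Sᶜ, if G.Adj u v then w s(u, v) else 0

/-!
Round every weight independently, up with probability equal to its fractional part and down
otherwise. The rounding error of an edge then has mean zero and lies in an interval of length
one, so by Hoeffding's lemma it is `1/4`-sub-Gaussian, and the error of a cut with at most `s`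
edges exceeds `ε` in absolute value with probability at most `2 exp (-2 ε² / s)`. For
`ε = √(s (n + 1))` this is `2 exp (-2 (n + 1))`, and the union bound over the `2 ^ n` cuts gives
a total failure probability `(2 / e²) ^ (n + 1) < 1`.
-/

open MeasureTheory ProbabilityTheory Real
open scoped NNReal

lemma ProbabilityTheory.HasSubgaussianMGF.mono {Ω : Type*} {mΩ : MeasurableSpace Ω}
    {μ : Measure Ω} {X : Ω → ℝ} {c c' : ℝ≥0} (h : HasSubgaussianMGF X c μ) (hc : c ≤ c') :
    HasSubgaussianMGF X c' μ where
  integrable_exp_mul := h.integrable_exp_mul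
  mgf_le t := (h.mgf_le t).trans (by gcongr)

lemma ProbabilityTheory.HasSubgaussianMGF.comp_eval {ι : Type*} [Fintype ι] {Ω : ι → Type*}
    [∀ i, MeasurableSpace (Ω i)] {μ : ∀ i, Measure (Ω i)} [∀ i, IsProbabilityMeasure (μ i)]
    {i : ι} {X : Ω i → ℝ} {c : ℝ≥0} (h : HasSubgaussianMGF X c (μ i)) :
    HasSubgaussianMGF (fun ω ↦ X (ω i)) c (Measure.pi μ) := by
  rw [← (measurePreserving_eval μ i).map_eq] at h
  exact h.of_map (measurable_pi_apply i).aemeasurable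

noncomputable def roundUpIf (x : ℝ) (b : Bool) : ℤ := if b then ⌈x⌉ else ⌊x⌋

lemma roundUpIf_eq_floor_or_ceil (x : ℝ) (b : Bool) :
    roundUpIf x b = ⌊x⌋ ∨ roundUpIf x b = ⌈x⌉ := by
  cases b <;> simp [roundUpIf]

lemma roundUpIf_sub_mem_Icc (x : ℝ) (b : Bool) :
    (roundUpIf x b - x : ℝ) ∈ Set.Icc (⌊x⌋ - x) (⌊x⌋ - x + 1) := by
  have hceil : (⌈x⌉ : ℝ) ≤ ⌊x⌋ + 1 := by exact_mod_cast Int.ceil_le_floor_add_one x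
  have hfloor : (⌊x⌋ : ℝ) ≤ ⌈x⌉ := by exact_mod_cast Int.floor_le_ceil x
  cases b <;> simp only [roundUpIf, Bool.false_eq_true, if_false, if_true, Set.mem_Icc] <;>
    constructor <;> linarith

noncomputable def roundingMeasure (x : ℝ) : Measure Bool :=
  bernoulliMeasure true false ⟨Int.fract x, Int.fract_nonneg x, (Int.fract_lt_one x).le⟩

instance (x : ℝ) : IsProbabilityMeasure (roundingMeasure x) := by
  unfold roundingMeasure; infer_instance

lemma integral_roundUpIf_sub (x : ℝ) : ∫ b, (roundUpIf x b - x : ℝ) ∂roundingMeasure x = 0 := by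
  rw [roundingMeasure, integral_bernoulliMeasure]
  simp only [roundUpIf, if_true, Bool.false_eq_true, if_false, smul_eq_mul]
  have hfloor : (⌊x⌋ : ℝ) - x = -Int.fract x := by rw [← Int.self_sub_floor]; ring
  rcases Int.fract_eq_zero_or_add_one_sub_ceil x with h | h
  · rw [hfloor, h]; ring
  · rw [hfloor]; linear_combination (Int.fract x) * h

lemma hasSubgaussianMGF_roundUpIf_sub (x : ℝ) :
    HasSubgaussianMGF (fun b ↦ (roundUpIf x b - x : ℝ)) (1 / 4) (roundingMeasure x) := by
  convert hasSubgaussianMGF_of_mem_Icc_of_integral_eq_zero (by fun_prop)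
    (ae_of_all _ (roundUpIf_sub_mem_Icc x)) (integral_roundUpIf_sub x) using 1
  ext
  norm_num

section RoundingError

variable {ι : Type*} [Fintype ι] (w : ι → ℝ)

noncomputable def roundingMeasurePi : Measure (ι → Bool) :=
  Measure.pi fun i ↦ roundingMeasure (w i)

noncomputable def roundingError (s : Finset ι) (ω : ι → Bool) : ℝ :=
  ∑ i ∈ s, (roundUpIf (w i) (ω i) - w i : ℝ)

lemma hasSubgaussianMGF_roundingError (s : Finset ι) :
    HasSubgaussianMGF (roundingError w s) (#s / 4) (roundingMeasurePi w) := by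
  have h := HasSubgaussianMGF.sum_of_iIndepFun (s := s) (c := fun _ ↦ 1 / 4)
    (iIndepFun_pi (X := fun i b ↦ (roundUpIf (w i) b - w i : ℝ)) fun i ↦ by fun_prop)
    fun i _ ↦ HasSubgaussianMGF.comp_eval (μ := fun i ↦ roundingMeasure (w i))
      (hasSubgaussianMGF_roundUpIf_sub (w i))
  convert h using 1
  · ext ω; simp [roundingError]
  · simp [div_eq_mul_inv]
  · rfl

instance : IsProbabilityMeasure (roundingMeasurePi w) := by
  unfold roundingMeasurePi; infer_instance

lemma measureReal_le_abs_roundingError_le (s : Finset ι) {k : ℕ} (hk : #s ≤ k) {ε : ℝ}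
    (hε : 0 ≤ ε) :
    (roundingMeasurePi w).real {ω | ε ≤ |roundingError w s ω|} ≤ 2 * exp (-2 * ε ^ 2 / k) := by
  have hsub : HasSubgaussianMGF (roundingError w s) (k / 4) (roundingMeasurePi w) :=
    (hasSubgaussianMGF_roundingError w s).mono (by gcongr)
  have htail : ∀ {X : (ι → Bool) → ℝ}, HasSubgaussianMGF X (k / 4) (roundingMeasurePi w) →
      (roundingMeasurePi w).real {ω | ε ≤ X ω} ≤ exp (-2 * ε ^ 2 / k) := fun hX ↦ by
    convert hX.measure_ge_le hε using 2
    push_cast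
    ring
  calc (roundingMeasurePi w).real {ω | ε ≤ |roundingError w s ω|}
      ≤ (roundingMeasurePi w).real
          ({ω | ε ≤ roundingError w s ω} ∪ {ω | ε ≤ -roundingError w s ω}) :=
        measureReal_mono fun ω (hω : ε ≤ _) ↦ (le_abs.mp hω :)
    _ ≤ _ := measureReal_union_le _ _
    _ ≤ 2 * exp (-2 * ε ^ 2 / k) := by
        have hlower := htail hsub.neg
        simp only [Pi.neg_apply] at hlower
        linarith [htail hsub]

lemma exists_forall_abs_roundingError_lt {J : Type*} [Fintype J] (s : J → Finset ι) {k : ℕ}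
    (hk : ∀ j, #(s j) ≤ k) {ε : ℝ} (hε : 0 ≤ ε)
    (hsmall : Fintype.card J * (2 * exp (-2 * ε ^ 2 / k)) < 1) :
    ∃ ω : ι → Bool, ∀ j, |roundingError w (s j) ω| < ε := by
  by_contra! hbad
  have hcover : Set.univ ⊆ ⋃ j, {ω | ε ≤ |roundingError w (s j) ω|} := fun ω _ ↦
    Set.mem_iUnion.mpr (hbad ω)
  have := calc (1 : ℝ) = (roundingMeasurePi w).real Set.univ := by simp
    _ ≤ (roundingMeasurePi w).real (⋃ j, {ω | ε ≤ |roundingError w (s j) ω|}) :=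
        measureReal_mono hcover
    _ ≤ ∑ j, (roundingMeasurePi w).real {ω | ε ≤ |roundingError w (s j) ω|} :=
        measureReal_iUnion_fintype_le _
    _ ≤ ∑ _j : J, 2 * exp (-2 * ε ^ 2 / k) :=
        Finset.sum_le_sum fun j _ ↦ measureReal_le_abs_roundingError_le w (s j) (hk j) hε
    _ = Fintype.card J * (2 * exp (-2 * ε ^ 2 / k)) := by simp
  linarith

end RoundingError

section Cuts

variable {V : Type} [Fintype V] (G : SimpleGraph V)

noncomputable def cutEdgeFinset (S : Finset V) : Finset (Sym2 V) :=
  ((S ×ˢ Sᶜ).filter fun p ↦ G.Adj p.1 p.2).image fun p ↦ s(p.1, p.2)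

lemma cutEdges_eq_sum_cutEdgeFinset (f : Sym2 V → ℝ) (S : Finset V) :
    cutEdges G f S = ∑ e ∈ cutEdgeFinset G S, f e := by
  rw [cutEdgeFinset, sum_image, cutEdges, sum_filter, sum_product]
  rintro ⟨u, v⟩ huv ⟨u', v'⟩ huv' heq
  simp only [coe_filter, mem_product, mem_compl, Set.mem_ofPred_eq] at huv huv'
  rcases Sym2.eq_iff.mp heq with ⟨rfl, rfl⟩ | ⟨rfl, -⟩
  · rfl
  · exact absurd huv.1.1 huv'.1.2

lemma card_cutEdgeFinset_le (S : Finset V) : #(cutEdgeFinset G S) ≤ G.edgeSet.ncard := by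
  rw [Set.ncard_eq_toFinset_card']
  refine card_le_card fun e he ↦ ?_
  obtain ⟨⟨u, v⟩, huv, rfl⟩ := mem_image.mp he
  exact Set.mem_toFinset.mpr (mem_filter.mp huv).2

end Cuts

lemma two_pow_mul_exp_neg_lt_one (n : ℕ) : 2 ^ n * (2 * exp (-2 * (n + 1))) < 1 := by
  have hbase : 2 * exp (-2) < 1 := by
    rw [exp_neg, ← div_eq_mul_inv, div_lt_one (exp_pos 2)]
    linarith [add_one_le_exp 2]
  calc (2 : ℝ) ^ n * (2 * exp (-2 * (n + 1))) = (2 * exp (-2)) ^ (n + 1) := by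
        rw [mul_pow, ← exp_nat_mul]; push_cast; ring_nf
    _ < 1 := pow_lt_one₀ (by positivity) hbase (Nat.succ_ne_zero n)

theorem rounding_preserves_cuts_general {V : Type} [Fintype V]
    (G : SimpleGraph V) (w : Sym2 V → ℝ)
    (hs : 1 ≤ G.edgeSet.ncard) :
    ∃ w' : Sym2 V → ℤ,
      (∀ e ∈ G.edgeSet, w' e = ⌊w e⌋ ∨ w' e = ⌈w e⌉) ∧
      ∀ S : Finset V,
        |cutEdges G (fun e => (w' e : ℝ)) S - cutEdges G w S| ≤
          Real.sqrt ((G.edgeSet.ncard : ℝ) * ((Fintype.card V : ℝ) + 1)) := by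
  set ε := √((G.edgeSet.ncard : ℝ) * ((Fintype.card V : ℝ) + 1))
  have hsmall : Fintype.card (Finset V) * (2 * exp (-2 * ε ^ 2 / G.edgeSet.ncard)) < 1 := by
    have hs' : (G.edgeSet.ncard : ℝ) ≠ 0 := by exact_mod_cast Nat.one_le_iff_ne_zero.mp hs
    rw [Fintype.card_finset, sq_sqrt (by positivity), mul_div_assoc, mul_div_cancel_left₀ _ hs']
    exact_mod_cast two_pow_mul_exp_neg_lt_one (Fintype.card V)
  obtain ⟨ω, hω⟩ := exists_forall_abs_roundingError_lt w (cutEdgeFinset G)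
    (card_cutEdgeFinset_le G) (sqrt_nonneg _) hsmall
  refine ⟨fun e ↦ roundUpIf (w e) (ω e), fun e _ ↦ roundUpIf_eq_floor_or_ceil _ _, fun S ↦ ?_⟩
  rw [cutEdges_eq_sum_cutEdgeFinset, cutEdges_eq_sum_cutEdgeFinset, ← sum_sub_distrib]
  exact (hω S).le

/-- Unbiased randomized rounding of edge weights: for a graph with `n` vertices and `s ≥ 1`
edges with nonnegative weights `w`, there is an integer weight function `w'` with
`w'(e) ∈ {⌊w e⌋, ⌈w e⌉}` on every edge, whose every cut value differs from that of `w` by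
at most `√(s(n+1))`. -/
theorem rounding_preserves_cuts {V : Type} [Fintype V] [DecidableEq V]
    (G : SimpleGraph V) (w : Sym2 V → ℝ)
    (hw : ∀ e ∈ G.edgeSet, 0 ≤ w e) (hs : 1 ≤ G.edgeSet.ncard) :
    ∃ w' : Sym2 V → ℤ,
      (∀ e ∈ G.edgeSet, w' e = ⌊w e⌋ ∨ w' e = ⌈w e⌉) ∧
      ∀ S : Finset V,
        |cutEdges G (fun e => (w' e : ℝ)) S - cutEdges G w S| ≤
          Real.sqrt ((G.edgeSet.ncard : ℝ) * ((Fintype.card V : ℝ) + 1)) :=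
  rounding_preserves_cuts_general G w hs
end

section
/- Let G be a connected simple graph on a finite vertex set V with edge weights w, and let T be a maximum-weight spanning tree of G, i.e., a spanning subgraph of G that is a tree on V and whose total edge weight is at least that of every spanning tree of G. Then for every subset S ⊆ V with ∅ ≠ S ≠ V, the tree T contains an edge e crossing the cut (S, V∖S) whose weight w(e) equals the maximum of w(f) over all edges f of G crossing the cut (S, V∖S). -/
open Finset

attribute [local instance] Classical.propDecidable

/-- Twice the total edge weight of a graph `H` (each edge counted in both orientations). -/
noncomputable def totalWeight {V : Type} [Fintype V] (H : SimpleGraph V) (w : Sym2 V → ℝ) : ℝ :=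
  ∑ u : V, ∑ v : V, if H.Adj u v then w s(u, v) else 0

/-!
Let `xy` be an edge of `G` across the cut that is not in `T`. The `T`-path from `x` to `y` crosses
the cut at some tree edge `uv`. Swapping `uv` for `xy` yields again a spanning tree of `G`: `xy`
closes a cycle through `uv`, so the new graph stays connected, and it still has `|V| - 1` edges.
Maximality of `T` then forces `w(xy) ≤ w(uv)`, so a heaviest tree edge across the cut dominates
every edge of `G` across it.
-/

namespace SimpleGraph
variable {V : Type}

lemma card_filter_adj_mk_eq [Fintype V] (H : SimpleGraph V) {e : Sym2 V} (he : e ∈ H.edgeSet) :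
    #{p : V × V | H.Adj p.1 p.2 ∧ s(p.1, p.2) = e} = 2 := by
  induction e with | h a b => ?_
  have hab : a ≠ b := H.ne_of_adj he
  rw [show ({p : V × V | H.Adj p.1 p.2 ∧ s(p.1, p.2) = s(a, b)} : Finset _) = {(a, b), (b, a)} by
    ext ⟨c, d⟩
    simp only [mem_filter, mem_univ, true_and, mem_insert, mem_singleton, Prod.mk.injEq,
      Sym2.eq_iff]
    constructor
    · exact fun h => h.2
    · rintro (⟨rfl, rfl⟩ | ⟨rfl, rfl⟩)
      · exact ⟨he, Or.inl ⟨rfl, rfl⟩⟩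
      · exact ⟨he.symm, Or.inr ⟨rfl, rfl⟩⟩]
  exact card_pair (by simp [hab])

lemma totalWeight_eq_two_mul_sum_edgeFinset [Fintype V] (H : SimpleGraph V) [Fintype H.edgeSet]
    (w : Sym2 V → ℝ) :
    totalWeight H w = 2 * ∑ e ∈ H.edgeFinset, w e := by
  rw [totalWeight, ← Fintype.sum_prod_type', ← sum_filter,
    ← sum_fiberwise_of_maps_to (g := fun p => s(p.1, p.2)) (t := H.edgeFinset) (by simp),
    mul_sum]
  refine sum_congr rfl fun e he => ?_
  rw [filter_filter, sum_congr rfl fun p hp => congrArg w (mem_filter.1 hp).2.2,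
    sum_const, card_filter_adj_mk_eq H (mem_edgeFinset.1 he), two_smul, two_mul]

variable {T : SimpleGraph V} {x y u v : V}

lemma edgeSet_sup_edge_deleteEdges (hxy : x ≠ y) :
    ((T ⊔ edge x y).deleteEdges {s(u, v)}).edgeSet = insert s(x, y) T.edgeSet \ {s(u, v)} := by
  rw [edgeSet_deleteEdges, edgeSet_sup, edgeSet_edge_of_ne hxy, Set.union_singleton]

lemma IsTree.sup_edge_deleteEdges [Finite V] (hT : T.IsTree) (hxy : ¬T.Adj x y) (hne : x ≠ y)
    {p : T.Walk x y} (hp : p.IsPath) (huv : s(u, v) ∈ p.edges) :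
    ((T ⊔ edge x y).deleteEdges {s(u, v)}).IsTree := by
  have hyx : (T ⊔ edge x y).Adj y x := by simp [edge_adj, hne.symm]
  have hcycle : (Walk.cons hyx (p.mapLe le_sup_left)).IsCycle := by
    refine Walk.cons_isCycle_iff _ _ |>.2 ⟨hp.mapLe _, ?_⟩
    rw [Walk.edges_mapLe_eq_edges, Sym2.eq_swap]
    exact fun h => hxy (p.adj_of_mem_edges h)
  have hbridge : ¬(T ⊔ edge x y).IsBridge s(u, v) := isBridge_iff.not_left.2
    (adj_and_reachable_delete_edges_iff_exists_cycle.2 ⟨y, _, hcycle, by simp [huv]⟩).2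
  rw [isTree_iff_connected_and_card] at hT ⊢
  refine ⟨(hT.1.mono le_sup_left).connected_delete_edge_of_not_isBridge hbridge, ?_⟩
  rw [edgeSet_sup_edge_deleteEdges hne, Nat.card_coe_set_eq,
    Set.ncard_exchange' (T.mem_edgeSet.not.2 hxy) (p.edges_subset_edgeSet huv),
    ← Nat.card_coe_set_eq, hT.2]

lemma totalWeight_sup_edge_deleteEdges [Fintype V] (w : Sym2 V → ℝ) (hxy : ¬T.Adj x y)
    (hne : x ≠ y) (huv : T.Adj u v) :
    totalWeight ((T ⊔ edge x y).deleteEdges {s(u, v)}) w =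
      totalWeight T w + 2 * (w s(x, y) - w s(u, v)) := by
  have hedges : ((T ⊔ edge x y).deleteEdges {s(u, v)}).edgeFinset =
      insert s(x, y) T.edgeFinset \ {s(u, v)} := by
    rw [← Finset.coe_inj, coe_sdiff, coe_insert, coe_singleton, coe_edgeFinset, coe_edgeFinset,
      edgeSet_sup_edge_deleteEdges hne]
  have hxyT : s(x, y) ∉ T.edgeFinset := by simpa using hxy
  have huvT : s(u, v) ∈ insert s(x, y) T.edgeFinset := by simp [huv]
  rw [totalWeight_eq_two_mul_sum_edgeFinset, totalWeight_eq_two_mul_sum_edgeFinset, hedges,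
    sdiff_singleton_eq_erase, sum_erase_eq_sub huvT, sum_insert hxyT]
  ring

structure IsMaxWeightSpanningTree [Fintype V] (G T : SimpleGraph V) (w : Sym2 V → ℝ) : Prop where
  le : T ≤ G
  isTree : T.IsTree
  totalWeight_le : ∀ T' : SimpleGraph V, T' ≤ G → T'.IsTree →
    totalWeight T' w ≤ totalWeight T w

lemma IsMaxWeightSpanningTree.exists_crossing_adj_weight_ge [Fintype V] {G : SimpleGraph V}
    {w : Sym2 V → ℝ} (hT : IsMaxWeightSpanningTree G T w) {S : Set V} (hxy : G.Adj x y)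
    (hx : x ∈ S) (hy : y ∉ S) :
    ∃ u v, T.Adj u v ∧ u ∈ S ∧ v ∉ S ∧ w s(x, y) ≤ w s(u, v) := by
  by_cases hTxy : T.Adj x y
  · exact ⟨x, y, hTxy, hx, hy, le_rfl⟩
  obtain ⟨p, hp⟩ := hT.isTree.connected.exists_isPath x y
  obtain ⟨⟨⟨u, v⟩, huv⟩, hd, hu, hv⟩ := p.exists_boundary_dart S hx hy
  refine ⟨u, v, huv, hu, hv, not_lt.1 fun hlt => ?_⟩
  have huvp : s(u, v) ∈ p.edges := List.mem_map_of_mem hd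
  have hle := hT.totalWeight_le _
    ((deleteEdges_le _).trans (sup_le hT.le ((edge_le_iff G).2 (Or.inr hxy))))
    (hT.isTree.sup_edge_deleteEdges hTxy hxy.ne hp huvp)
  rw [totalWeight_sup_edge_deleteEdges w hTxy hxy.ne huv] at hle
  linarith

end SimpleGraph

theorem max_spanning_tree_heaviest_cut_edge_general {V : Type} [Fintype V]
    (G : SimpleGraph V) (w : Sym2 V → ℝ)
    (T : SimpleGraph V) (hTG : T ≤ G) (hT : T.IsTree)
    (hmax : ∀ T' : SimpleGraph V, T' ≤ G → T'.IsTree → totalWeight T' w ≤ totalWeight T w) :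
    ∀ S : Set V, S.Nonempty → S ≠ Set.univ →
      ∃ u v : V, T.Adj u v ∧ u ∈ S ∧ v ∉ S ∧
        ∀ x y : V, G.Adj x y → x ∈ S → y ∉ S → w s(x, y) ≤ w s(u, v) := by
  intro S ⟨a, ha⟩ hSu
  obtain ⟨b, hb⟩ := Set.ne_univ_iff_exists_notMem S |>.1 hSu
  obtain ⟨p⟩ := hT.connected a b
  obtain ⟨d, -, hd⟩ := p.exists_boundary_dart S ha hb
  obtain ⟨⟨u, v⟩, huv, hmax_uv⟩ :=
    exists_max_image {e : V × V | T.Adj e.1 e.2 ∧ e.1 ∈ S ∧ e.2 ∉ S}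
      (fun e => w s(e.1, e.2)) ⟨d.toProd, mem_filter.2 ⟨mem_univ _, d.adj, hd⟩⟩
  obtain ⟨huv, hu, hv⟩ := (mem_filter.1 huv).2
  refine ⟨u, v, huv, hu, hv, fun x y hxy hx hy => ?_⟩
  obtain ⟨u', v', hu'v', hu', hv', hle⟩ :=
    (SimpleGraph.IsMaxWeightSpanningTree.mk hTG hT hmax).exists_crossing_adj_weight_ge hxy hx hy
  exact hle.trans (hmax_uv (u', v') (by simp [hu'v', hu', hv']))

/-- A maximum-weight spanning tree contains, for every nontrivial cut `(S, V∖S)`, an edge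
crossing the cut whose weight is maximal among all edges of `G` crossing that cut. -/
theorem max_spanning_tree_heaviest_cut_edge {V : Type} [Fintype V]
    (G : SimpleGraph V) (hG : G.Connected) (w : Sym2 V → ℝ)
    (T : SimpleGraph V) (hTG : T ≤ G) (hT : T.IsTree)
    (hmax : ∀ T' : SimpleGraph V, T' ≤ G → T'.IsTree → totalWeight T' w ≤ totalWeight T w) :
    ∀ S : Set V, S.Nonempty → S ≠ Set.univ →
      ∃ u v : V, T.Adj u v ∧ u ∈ S ∧ v ∉ S ∧
        ∀ x y : V, G.Adj x y → x ∈ S → y ∉ S → w s(x, y) ≤ w s(u, v) :=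
  max_spanning_tree_heaviest_cut_edge_general G w T hTG hT hmax
end
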